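/- Let M be a graded finitely generated faithful graded multiplication R-module and U a proper graded submodule with J_gr(M) = J_gr(R)M. Then U is a graded weakly J_gr-semiprime submodule of M if and only if (U :_R M) is a graded weakly J_gr-semiprime ideal of R. -/

import Mathlib

open Pointwise

/-- A submodule is graded if it is generated by its homogeneous elements. -/
def IsGradedSub {Γ R M σ : Type*} [CommRing R] [AddCommGroup M] [Module R M]
    [SetLike σ M] (ℳ : Γ → σ) (U : Submodule R M) : Prop :=
  U = Submodule.span R {m | m ∈ U ∧ SetLike.IsHomogeneousElem ℳ m}

/-- A graded maximal submodule. -/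
def IsGrMaximal {Γ R M σ : Type*} [CommRing R] [AddCommGroup M] [Module R M]
    [SetLike σ M] (ℳ : Γ → σ) (B : Submodule R M) : Prop :=
  IsGradedSub ℳ B ∧ B ≠ ⊤ ∧
    ∀ L : Submodule R M, IsGradedSub ℳ L → B ≤ L → L = B ∨ L = ⊤

/-- The graded Jacobson radical: the intersection of all graded maximal submodules
(the whole module if there are none). -/
def Jgr {Γ R M σ : Type*} [CommRing R] [AddCommGroup M] [Module R M]
    [SetLike σ M] (ℳ : Γ → σ) : Submodule R M :=
  sInf {B | IsGrMaximal ℳ B}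

/-- Graded weakly semiprime submodule. -/
def IsGrWSemiprime {Γ R M σR σM : Type*} [CommRing R] [AddCommGroup M] [Module R M]
    [SetLike σR R] [SetLike σM M] (𝒜 : Γ → σR) (ℳ : Γ → σM) (U : Submodule R M) : Prop :=
  IsGradedSub ℳ U ∧ U ≠ ⊤ ∧
    ∀ (r : R) (m : M) (n : ℕ), 0 < n → SetLike.IsHomogeneousElem 𝒜 r →
      SetLike.IsHomogeneousElem ℳ m → r ^ n • m ≠ 0 → r ^ n • m ∈ U → r • m ∈ U

/-- Graded weakly `J_gr`-semiprime submodule. -/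
def IsGrWJgrSemiprime {Γ R M σR σM : Type*} [CommRing R] [AddCommGroup M] [Module R M]
    [SetLike σR R] [SetLike σM M] (𝒜 : Γ → σR) (ℳ : Γ → σM) (U : Submodule R M) : Prop :=
  IsGradedSub ℳ U ∧ U ≠ ⊤ ∧
    ∀ (r : R) (m : M) (n : ℕ), 0 < n → SetLike.IsHomogeneousElem 𝒜 r →
      SetLike.IsHomogeneousElem ℳ m → r ^ n • m ≠ 0 → r ^ n • m ∈ U → r • m ∈ U ⊔ Jgr ℳ

/-- The residual submodule `(U :_M L) = {m : M | L • m ⊆ U}`. -/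
def mcolon {R M : Type*} [CommRing R] [AddCommGroup M] [Module R M]
    (U : Submodule R M) (L : Ideal R) : Submodule R M where
  carrier := {m | ∀ x ∈ L, x • m ∈ U}
  add_mem' := by
    intro a b ha hb x hx
    simpa [smul_add] using U.add_mem (ha x hx) (hb x hx)
  zero_mem' := by intro x hx; simp
  smul_mem' := by
    intro c m hm x hx
    rw [smul_comm]
    exact U.smul_mem c (hm x hx)

/-! Since `M` is a multiplication module, `U = (U :_R M) M`, and since it is moreover finitely
generated and faithful it is cancellative: `ρ M ⊆ J M` forces `ρ ∈ J`. Together with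
`J_gr(M) = J_gr(R) M` this identifies `U + J_gr(M)` with `((U :_R M) + J_gr(R)) M`, so both
implications become statements about products in `R`: writing `R m = K M` for homogeneous `m`,
`r m` lies in `I M` as soon as `r c ∈ I` for every homogeneous `c ∈ K`. The weak hypotheses say
nothing when `r ^ n c = 0`, but then `r c` is a homogeneous nilpotent, hence lies in every graded
maximal ideal, i.e. in `J_gr(R)`. -/

open Submodule

section GradedSubmodule

variable {Γ R M σ : Type*} [CommRing R] [AddCommGroup M] [Module R M] [SetLike σ M]
  {ℳ : Γ → σ}

theorem isGradedSub_span {S : Set M} (hS : ∀ x ∈ S, SetLike.IsHomogeneousElem ℳ x) :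
    IsGradedSub ℳ (span R S) :=
  le_antisymm (span_le.2 fun x hx => subset_span ⟨subset_span hx, hS x hx⟩)
    (span_le.2 fun _ hx => hx.1)

theorem IsGradedSub.sup {V W : Submodule R M} (hV : IsGradedSub ℳ V) (hW : IsGradedSub ℳ W) :
    IsGradedSub ℳ (V ⊔ W) := by
  rw [hV, hW, ← span_union]
  exact isGradedSub_span fun x hx => hx.elim And.right And.right

end GradedSubmodule

section GradedJacobson

variable {Γ R σ : Type*} [CommRing R] [SetLike σ R] {𝒜 : Γ → σ}

theorem mem_Jgr_of_isNilpotent {ρ : R} (hρ : SetLike.IsHomogeneousElem 𝒜 ρ)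
    (hnil : IsNilpotent ρ) : ρ ∈ (Jgr 𝒜 : Ideal R) := by
  refine mem_sInf.2 fun B ⟨hBgr, hBne, hBmax⟩ => ?_
  have hρgr : IsGradedSub 𝒜 (span R {ρ}) := isGradedSub_span (by simpa using hρ)
  rcases hBmax _ (hBgr.sup hρgr) le_sup_left with h | h
  · exact h ▸ mem_sup_right (mem_span_singleton_self ρ)
  · obtain ⟨p, hp, q, hq, hpq⟩ := mem_sup.1 (h ▸ mem_top : (1 : R) ∈ B ⊔ span R {ρ})
    obtain ⟨t, rfl⟩ := mem_span_singleton.1 hq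
    have hunit : IsUnit p := eq_sub_of_add_eq hpq ▸ (hnil.smul t).isUnit_one_sub
    exact absurd (Ideal.eq_top_of_isUnit_mem B hp hunit) hBne

theorem mul_mem_Jgr_of_pow_mul_eq_zero [Add Γ] [SetLike.GradedMul 𝒜] {r c : R}
    (hr : SetLike.IsHomogeneousElem 𝒜 r) (hc : SetLike.IsHomogeneousElem 𝒜 c) {n : ℕ}
    (hn : 0 < n) (h : r ^ n * c = 0) : r * c ∈ (Jgr 𝒜 : Ideal R) := by
  obtain ⟨k, rfl⟩ := Nat.exists_eq_add_of_lt hn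
  exact mem_Jgr_of_isNilpotent (hr.mul hc) ⟨k + 1, by linear_combination c ^ k * h⟩

end GradedJacobson

section Cancellation

variable {R M : Type*} [CommRing R] [AddCommGroup M] [Module R M]

theorem le_colon_smul_top (K : Ideal R) : K ≤ (K • ⊤ : Submodule R M).colon ⊤ :=
  fun _ hc => mem_colon.2 fun _ _ => smul_mem_smul hc mem_top

theorem mul_mem_colon_top_of_smul_mem {N : Submodule R M} {y : M} {r c : R} (hr : r • y ∈ N)
    (hc : c ∈ (span R {y}).colon ⊤) : r * c ∈ N.colon ⊤ := by
  refine mem_colon.2 fun x _ => ?_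
  obtain ⟨f, hf⟩ := mem_span_singleton.1 (mem_colon.1 hc x trivial)
  rw [mul_smul, ← hf, smul_comm]
  exact N.smul_mem f hr

variable [FaithfulSMul R M]

theorem mul_eq_zero_of_smul_eq_zero_of_mem_colon {y : M} {r c : R} (hr : r • y = 0)
    (hc : c ∈ (span R {y}).colon ⊤) : r * c = 0 :=
  eq_of_smul_eq_smul fun x => by
    rw [zero_smul]
    simpa using mem_colon.1 (mul_mem_colon_top_of_smul_mem (N := ⊥) (by simpa using hr) hc) x

theorem sq_mul_mem_of_mem_colon_span_singleton {m : M} {c ρ : R} {J : Ideal R}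
    (hc : c ∈ (span R {m}).colon ⊤) (hρ : ρ • m ∈ J • (⊤ : Submodule R M)) : c ^ 2 * ρ ∈ J := by
  have hcJ : J • (⊤ : Submodule R M) ≤ (J • span R {m}).comap (LinearMap.lsmul R M c) :=
    smul_le.2 fun j hj x _ => by
      rw [mem_comap, LinearMap.lsmul_apply, smul_comm]
      exact smul_mem_smul hj (mem_colon.1 hc x trivial)
  obtain ⟨g, hg, hgm⟩ := mem_smul_span_singleton.1 (hcJ hρ)
  rw [LinearMap.lsmul_apply] at hgm
  have hcg : c ^ 2 * ρ = g * c := eq_of_smul_eq_smul fun x => by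
    obtain ⟨f, hf⟩ := mem_span_singleton.1 (mem_colon.1 hc x trivial)
    calc (c ^ 2 * ρ) • x = f • c • ρ • m := by
          rw [show c ^ 2 * ρ = c * ρ * c by ring, mul_smul, ← hf, smul_comm, mul_smul]
      _ = (g * c) • x := by rw [← hgm, mul_smul, ← hf, smul_comm]
  exact hcg ▸ J.mul_mem_right c hg

theorem mem_of_forall_smul_mem_smul_top {s : Finset M} (hs : span R (s : Set M) = ⊤)
    (hcyc : ∀ m ∈ s, ∃ K : Ideal R, span R {m} = K • ⊤) {ρ : R} {J : Ideal R}
    (h : ∀ x : M, ρ • x ∈ J • (⊤ : Submodule R M)) : ρ ∈ J := by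
  -- `c ^ 2 * ρ ∈ J` for `c ∈ K`, so `M = √(J : ρ) M`, and Nakayama plus faithfulness give
  -- `(J : ρ) = R`.
  have htop : (⊤ : Submodule R M) ≤ (J.colon {ρ}).radical • ⊤ := by
    refine hs.ge.trans (span_le.2 fun m hm => ?_)
    obtain ⟨K, hK⟩ := hcyc m hm
    have hKQ : K ≤ (J.colon {ρ}).radical := fun c hc =>
      ⟨2, mem_colon_singleton.2 (sq_mul_mem_of_mem_colon_span_singleton
        (hK ▸ le_colon_smul_top K hc) (h m))⟩
    exact smul_mono_left hKQ (hK ▸ mem_span_singleton_self m)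
  obtain ⟨r, hr1, hr0⟩ := exists_sub_one_mem_and_smul_eq_zero_of_fg_of_le_smul _ ⊤ ⟨s, hs⟩ htop
  have hr : r = 0 := eq_of_smul_eq_smul fun x => by rw [hr0 x trivial, zero_smul]
  have hQ := Ideal.radical_eq_top.1 (Ideal.eq_top_of_isUnit_mem _ hr1 (by simp [hr]))
  simpa using (Ideal.eq_top_iff_one _).1 hQ

end Cancellation

section GradedMultiplication

variable {Γ R M : Type*} [CommRing R] [AddCommGroup M] [Module R M]
  {𝒜 : Γ → AddSubgroup R} {ℳ : Γ → AddSubgroup M}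

theorem smul_mem_smul_top_of_forall_homogeneous
    (hmult : ∀ V : Submodule R M, IsGradedSub ℳ V →
      ∃ K : Ideal R, IsGradedSub 𝒜 K ∧ V = K • (⊤ : Submodule R M))
    {y : M} (hy : SetLike.IsHomogeneousElem ℳ y) {r : R} {I : Ideal R}
    (h : ∀ c, SetLike.IsHomogeneousElem 𝒜 c → c ∈ (span R {y}).colon ⊤ → r * c ∈ I) :
    r • y ∈ I • (⊤ : Submodule R M) := by
  obtain ⟨K, hKgr, hK⟩ := hmult _ (isGradedSub_span (S := {y}) (by simpa using hy))
  have hKI : K ≤ I.colon {r} := by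
    rw [hKgr]
    refine span_le.2 fun c ⟨hcK, hc⟩ => ?_
    rw [SetLike.mem_coe, mem_colon_singleton, smul_eq_mul, mul_comm]
    exact h c hc (hK ▸ le_colon_smul_top K hcK)
  have hrK : K • (⊤ : Submodule R M) ≤ (I • ⊤ : Submodule R M).comap (LinearMap.lsmul R M r) :=
    smul_le.2 fun c hc x _ => by
      rw [mem_comap, LinearMap.lsmul_apply, smul_smul, mul_comm]
      exact smul_mem_smul (mem_colon_singleton.1 (hKI hc)) mem_top
  exact hrK (hK ▸ mem_span_singleton_self y)

variable [Add Γ] [SetLike.GradedMul 𝒜]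

theorem mul_smul_mem_sup_Jgr_of_isGrWJgrSemiprime [DecidableEq Γ] [SetLike.GradedSMul 𝒜 ℳ]
    [DirectSum.Decomposition ℳ] [FaithfulSMul R M]
    (hmult : ∀ V : Submodule R M, IsGradedSub ℳ V →
      ∃ K : Ideal R, IsGradedSub 𝒜 K ∧ V = K • (⊤ : Submodule R M))
    (hJ : Jgr ℳ = (Jgr 𝒜 : Ideal R) • (⊤ : Submodule R M))
    {U : Submodule R M} (hU : IsGrWJgrSemiprime 𝒜 ℳ U) {a b : R} {n : ℕ} (hn : 0 < n)
    (ha : SetLike.IsHomogeneousElem 𝒜 a) (hb : SetLike.IsHomogeneousElem 𝒜 b)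
    (hab : a ^ n * b ∈ U.colon ⊤) (x : M) : (a * b) • x ∈ U ⊔ Jgr ℳ := by
  induction x using DirectSum.Decomposition.inductionOn ℳ with
  | zero => simp
  | @homogeneous i y =>
    by_cases h0 : (a ^ n * b) • (y : M) = 0
    · refine mem_sup_right (hJ ▸ smul_mem_smul_top_of_forall_homogeneous hmult ⟨i, y.2⟩
        fun c hc hcy => mul_assoc a b c ▸ mul_mem_Jgr_of_pow_mul_eq_zero ha (hb.mul hc) hn ?_)
      rw [← mul_assoc]
      exact mul_eq_zero_of_smul_eq_zero_of_mem_colon h0 hcy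
    · obtain ⟨j, hj⟩ := hb
      rw [mul_smul]
      refine hU.2.2 a (b • (y : M)) n hn ha ⟨j + i, SetLike.GradedSMul.smul_mem hj y.2⟩
        (by rwa [smul_smul]) ?_
      rw [smul_smul]
      exact mem_colon.1 hab y trivial
  | add x y hx hy => rw [smul_add]; exact add_mem hx hy

theorem smul_mem_colon_sup_Jgr_smul_top_of_isGrWJgrSemiprime
    (hmult : ∀ V : Submodule R M, IsGradedSub ℳ V →
      ∃ K : Ideal R, IsGradedSub 𝒜 K ∧ V = K • (⊤ : Submodule R M))
    {U : Submodule R M} (hL : IsGrWJgrSemiprime 𝒜 𝒜 (U.colon ⊤)) {r : R} {m : M} {n : ℕ}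
    (hn : 0 < n) (hr : SetLike.IsHomogeneousElem 𝒜 r) (hm : SetLike.IsHomogeneousElem ℳ m)
    (hrm : r ^ n • m ∈ U) : r • m ∈ (U.colon ⊤ ⊔ Jgr 𝒜) • (⊤ : Submodule R M) :=
  smul_mem_smul_top_of_forall_homogeneous hmult hm fun c hc hcm => by
    by_cases h0 : r ^ n * c = 0
    · exact mem_sup_right (mul_mem_Jgr_of_pow_mul_eq_zero hr hc hn h0)
    · exact hL.2.2 r c n hn hr hc h0 (mul_mem_colon_top_of_smul_mem hrm hcm)

end GradedMultiplication

variable {Γ : Type*} [AddGroup Γ] [DecidableEq Γ]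
  {R : Type*} [CommRing R] (𝒜 : Γ → AddSubgroup R) [GradedRing 𝒜]
  {M : Type*} [AddCommGroup M] [Module R M]
  (ℳ : Γ → AddSubgroup M) [SetLike.GradedSMul 𝒜 ℳ] [DirectSum.Decomposition ℳ]

theorem stmt18 (hfaith : ∀ r : R, (∀ m : M, r • m = 0) → r = 0)
    (hfg : ∃ s : Finset M, (∀ m ∈ s, SetLike.IsHomogeneousElem ℳ m) ∧
      Submodule.span R (s : Set M) = ⊤)
    (hmult : ∀ V : Submodule R M, IsGradedSub ℳ V →
      ∃ K : Ideal R, IsGradedSub 𝒜 K ∧ V = K • (⊤ : Submodule R M))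
    (U : Submodule R M) (hU : IsGradedSub ℳ U)
    (hJ : Jgr ℳ = (Jgr 𝒜 : Ideal R) • (⊤ : Submodule R M)) :
    IsGrWJgrSemiprime 𝒜 ℳ U ↔ IsGrWJgrSemiprime 𝒜 𝒜 (U.colon ⊤) := by
  have : FaithfulSMul R M :=
    ⟨fun h => sub_eq_zero.1 (hfaith _ fun m => by rw [sub_smul, h, sub_self])⟩
  obtain ⟨s, hs, hspan⟩ := hfg
  have hcancel {ρ : R} {J : Ideal R} (h : ∀ x : M, ρ • x ∈ J • (⊤ : Submodule R M)) : ρ ∈ J :=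
    mem_of_forall_smul_mem_smul_top hspan (fun m hm => (hmult _ (isGradedSub_span
      (S := {m}) (by simpa using hs m hm))).imp fun _ => And.right) h
  obtain ⟨K, hK, hUK⟩ := hmult U hU
  have hL : U.colon ⊤ = K :=
    le_antisymm (fun r hr => hcancel fun x => hUK ▸ mem_colon.1 hr x trivial)
      (hUK ▸ le_colon_smul_top K)
  have hsup : (U.colon ⊤ ⊔ Jgr 𝒜) • (⊤ : Submodule R M) = U ⊔ Jgr ℳ := by
    rw [sup_smul, hL, ← hUK, hJ]
  have htop : U.colon ⊤ ≠ ⊤ ↔ U ≠ ⊤ := by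
    rw [Ne, Ne, colon_eq_top_iff_subset, Set.top_eq_univ, Set.univ_subset_iff, coe_eq_univ]
  constructor
  · intro hUs
    refine ⟨hL ▸ hK, htop.2 hUs.2.1, fun a b n hn ha hb _ hab => hcancel fun x => ?_⟩
    exact hsup ▸ mul_smul_mem_sup_Jgr_of_isGrWJgrSemiprime hmult hJ hUs hn ha hb hab x
  · intro hLs
    refine ⟨hU, htop.1 hLs.2.1, fun r m n hn hr hm _ hrm => ?_⟩
    exact hsup ▸ smul_mem_colon_sup_Jgr_smul_top_of_isGrWJgrSemiprime hmult hLs hn hr hm hrm
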